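/- Let ψ : ℝ^d → ℝ^d be defined by ψ(x) = x(1+|x|^δ)^{-1} with δ ≥ 2. Then for all x ∈ ℝ^d, ‖ψ'(x) − I‖ ≤ min(1 + δ/4, (δ+1)|x|^δ), where I is the identity map on ℝ^d. -/

import Mathlib

/-!
With `t = ‖x‖^δ`, the product rule gives
`ψ'(x) - I = -(t / (1 + t)) I - δ ‖x‖^(δ-2) (1 + t)⁻² ⟪x, ·⟫ x`,
and the rank-one part has norm `δ t / (1 + t)²`. The claim then reduces to the scalar bounds
`t / (1 + t) ≤ min 1 t` and `t / (1 + t)² ≤ min (1/4) t`, the `1/4` coming from `4t ≤ (1 + t)²`.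
-/

open Real

section

variable {E : Type*} [NormedAddCommGroup E] [InnerProductSpace ℝ E]

theorem hasFDerivAt_inv_one_add_norm_rpow_smul {p : ℝ} (hp : 1 < p) (x : E) :
    HasFDerivAt (fun y : E => (1 + ‖y‖ ^ p)⁻¹ • y)
      ((1 + ‖x‖ ^ p)⁻¹ • ContinuousLinearMap.id ℝ E
        - ((1 + ‖x‖ ^ p) ^ 2)⁻¹ • ((p * ‖x‖ ^ (p - 2)) • innerSL ℝ x).smulRight x) x := by
  have hden : 1 + ‖x‖ ^ p ≠ 0 := by positivity
  have hinv := (hasDerivAt_inv hden).comp_hasFDerivAt x ((hasFDerivAt_norm_rpow x hp).const_add 1)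
  refine (hinv.smul (hasFDerivAt_id x)).congr_fderiv ?_
  ext v
  simp [sub_eq_add_neg, mul_smul]

theorem norm_smulRight_norm_rpow_innerSL {p : ℝ} (hp : 0 < p) (x : E) :
    ‖((p * ‖x‖ ^ (p - 2)) • innerSL ℝ x).smulRight x‖ = p * ‖x‖ ^ p := by
  rw [ContinuousLinearMap.norm_smulRight_apply, norm_smul, innerSL_apply_norm, norm_mul,
    norm_of_nonneg hp.le, norm_of_nonneg (by positivity), mul_assoc, mul_assoc, ← sq,
    ← rpow_natCast, ← rpow_add' (norm_nonneg x) (by norm_num; exact hp.ne')]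
  norm_num

theorem norm_fderiv_inv_one_add_norm_rpow_smul_sub_id_le {p : ℝ} (hp : 1 < p) (x : E) :
    ‖fderiv ℝ (fun y : E => (1 + ‖y‖ ^ p)⁻¹ • y) x - ContinuousLinearMap.id ℝ E‖
      ≤ ‖x‖ ^ p / (1 + ‖x‖ ^ p) + p * ‖x‖ ^ p / (1 + ‖x‖ ^ p) ^ 2 := by
  rw [(hasFDerivAt_inv_one_add_norm_rpow_smul hp x).fderiv, sub_right_comm]
  nth_rw 2 [← one_smul ℝ (ContinuousLinearMap.id ℝ E)]
  rw [← sub_smul]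
  set t := ‖x‖ ^ p
  have ht : 0 ≤ t := by positivity
  have hscalar : ‖(1 + t)⁻¹ - 1‖ = t / (1 + t) := by
    rw [norm_of_nonpos, neg_sub] <;> field_simp <;> linarith
  calc _ ≤ ‖(1 + t)⁻¹ - 1‖ * ‖ContinuousLinearMap.id ℝ E‖
        + ‖((1 + t) ^ 2)⁻¹‖ * ‖((p * ‖x‖ ^ (p - 2)) • innerSL ℝ x).smulRight x‖ :=
        (norm_sub_le _ _).trans (add_le_add (norm_smul_le _ _) (norm_smul_le _ _))
    _ ≤ t / (1 + t) * 1 + ((1 + t) ^ 2)⁻¹ * (p * t) := by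
        rw [hscalar, norm_smulRight_norm_rpow_innerSL (by linarith), norm_of_nonneg (by positivity)]
        gcongr
        exact ContinuousLinearMap.norm_id_le
    _ = _ := by ring

end

theorem div_one_add_add_div_one_add_sq_le_min {p t : ℝ} (hp : 0 ≤ p) (ht : 0 ≤ t) :
    t / (1 + t) + p * t / (1 + t) ^ 2 ≤ min (1 + p / 4) ((p + 1) * t) := by
  have h1t : 0 < 1 + t := by linarith
  refine le_min ?_ ?_
  · have h1 : t / (1 + t) ≤ 1 := by rw [div_le_one h1t]; linarith
    have h2 : p * t / (1 + t) ^ 2 ≤ p / 4 := by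
      rw [div_le_iff₀ (by positivity)]
      nlinarith [mul_nonneg hp (sq_nonneg (1 - t))]
    linarith
  · have h1 : t / (1 + t) ≤ t := div_le_self ht (by linarith)
    have h2 : p * t / (1 + t) ^ 2 ≤ p * t := div_le_self (by positivity) (by nlinarith)
    linarith

/-- For `ψ(x) = x (1 + |x|^δ)⁻¹` with `δ ≥ 2`, the operator norm of
`ψ'(x) − I` satisfies `‖ψ'(x) − I‖ ≤ min(1 + δ/4, (δ+1)|x|^δ)`. -/
theorem stmt1 (d : ℕ) (δ : ℝ) (hδ : 2 ≤ δ)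
    (ψ : EuclideanSpace ℝ (Fin d) → EuclideanSpace ℝ (Fin d))
    (hψ : ∀ x, ψ x = (1 + ‖x‖ ^ δ)⁻¹ • x) :
    ∀ x : EuclideanSpace ℝ (Fin d),
      ‖fderiv ℝ ψ x - ContinuousLinearMap.id ℝ (EuclideanSpace ℝ (Fin d))‖
        ≤ min (1 + δ / 4) ((δ + 1) * ‖x‖ ^ δ) := by
  intro x
  obtain rfl : ψ = fun y => (1 + ‖y‖ ^ δ)⁻¹ • y := funext hψ
  exact (norm_fderiv_inv_one_add_norm_rpow_smul_sub_id_le (by linarith) x).trans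
    (div_one_add_add_div_one_add_sq_le_min (by linarith) (by positivity))
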